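/- Abstract version of Lemma 3 (fixed points meet image of σ−1): Let p be a prime, σ a generator of a cyclic group H of order p, M an 𝔽_p[H]-module, A an 𝔽_p-vector space, and c: M → A, r: A → M 𝔽_p-linear maps with: (i) r ∘ c = (σ−1)^{p−1} as endomorphisms of M; (ii) c is surjective; (iii) ker c = (σ−1)M; (iv) c commutes with σ in the sense c(σm)=c(m); (v) ker r = c(M^H) (the image under c of the H-fixed points equals the kernel of r, and c restricted to a suitable trivial submodule X ⊆ M^H is a bijection onto ker r). Then M^H ∩ (σ−1)M = (σ−1)^{p−1}M. -/

import Mathlib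

/-- The group algebra `𝔽_p[H]` for `H` the cyclic group of order `p`, generated by `σ`. -/
abbrev Sp (p : ℕ) : Type := MonoidAlgebra (ZMod p) (Multiplicative (ZMod p))

/-- The generator `σ` of the cyclic group `H`, as an element of the group algebra. -/
noncomputable def sigma (p : ℕ) : Sp p :=
  MonoidAlgebra.of (ZMod p) (Multiplicative (ZMod p)) (Multiplicative.ofAdd 1)

/-- Scalar multiplication by `s ∈ 𝔽_p[H]` as an `𝔽_p`-linear endomorphism. -/
noncomputable def smulMap (p : ℕ) (M : Type*) [AddCommGroup M] [Module (Sp p) M]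
    [Module (ZMod p) M] [IsScalarTower (ZMod p) (Sp p) M] (s : Sp p) :
    M →ₗ[ZMod p] M :=
  (LinearMap.lsmul (Sp p) M s).restrictScalars (ZMod p)

/-!
Write `T = σ - 1`, so that `T^p = 0` and `r ∘ c = T^(p-1)`. One inclusion is immediate. For the
other, let `m = T^j w` with `T m = 0` and `1 ≤ j < p - 1`. Then `T^(p-1) w = 0`, i.e.
`c w ∈ ker r`, so `c w = c x` for some fixed point `x`; hence `w - x = T v` lies in
`ker c = T M`, and `m = T^j (w - x) = T^(j+1) v` because `T^j` kills `x`. Raising `j` up to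
`p - 1` gives the claim.
-/

open LinearMap

section
variable {R M A : Type*} [Semiring R] [AddCommGroup M] [Module R M] [AddCommGroup A] [Module R A]
  {T : Module.End R M} {c : M →ₗ[R] A} {r : A →ₗ[R] M} {n : ℕ}

theorem Module.End.pow_apply_eq_zero_of_le {i j : ℕ} (hij : i ≤ j) {w : M}
    (hw : (T ^ i) w = 0) : (T ^ j) w = 0 := by
  rw [← Nat.sub_add_cancel hij, pow_add, Module.End.mul_apply, hw, map_zero]

theorem mem_range_pow_succ_of_mem_ker_inf_range_pow (hrc : r ∘ₗ c = T ^ n)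
    (hker : ker c = range T) (hfix : ker r ≤ (ker T).map c) {j : ℕ} (hj : 1 ≤ j) (hjn : j < n)
    {m : M} (hm : m ∈ ker T ⊓ range (T ^ j)) : m ∈ range (T ^ (j + 1)) := by
  obtain ⟨hTm, w, rfl⟩ := hm
  have hw : (T ^ n) w = 0 :=
    Module.End.pow_apply_eq_zero_of_le hjn (by rwa [pow_succ', Module.End.mul_apply])
  have hcw : c w ∈ ker r := by rwa [mem_ker, ← comp_apply, hrc]
  obtain ⟨x, hTx, hcx⟩ := hfix hcw
  have hwx : w - x ∈ range T := by rw [← hker, mem_ker, map_sub, hcx, sub_self]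
  obtain ⟨v, hv⟩ := hwx
  refine ⟨v, ?_⟩
  have hx : (T ^ j) x = 0 := Module.End.pow_apply_eq_zero_of_le hj (by rwa [pow_one])
  rw [pow_succ, Module.End.mul_apply, hv, map_sub, hx, sub_zero]

theorem ker_inf_range_le_range_pow (hrc : r ∘ₗ c = T ^ n) (hker : ker c = range T)
    (hfix : ker r ≤ (ker T).map c) (hn : 1 ≤ n) : ker T ⊓ range T ≤ range (T ^ n) := by
  suffices ∀ j, 1 ≤ j → j ≤ n → ker T ⊓ range T ≤ range (T ^ j) from this n hn le_rfl
  intro j hj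
  induction j, hj using Nat.le_induction with
  | base => simp
  | succ j hj ih =>
    intro hjn m hm
    exact mem_range_pow_succ_of_mem_ker_inf_range_pow hrc hker hfix hj hjn
      ⟨hm.1, ih (by omega) hm⟩

theorem range_pow_le_ker_inf_range (hT : T ^ (n + 1) = 0) (hn : 1 ≤ n) :
    range (T ^ n) ≤ ker T ⊓ range T := by
  rintro _ ⟨w, rfl⟩
  refine Submodule.mem_inf.2 ⟨?_, (T ^ (n - 1)) w, ?_⟩
  · rw [mem_ker, ← Module.End.mul_apply, ← pow_succ', hT, LinearMap.zero_apply]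
  · rw [← Module.End.mul_apply, ← pow_succ', Nat.sub_add_cancel hn]
end

theorem sigma_pow_self (p : ℕ) : sigma p ^ p = 1 := by
  rw [sigma, ← map_pow, ← ofAdd_nsmul, nsmul_one, ZMod.natCast_self, ofAdd_zero, map_one]

theorem sigma_sub_one_pow_self (p : ℕ) [Fact p.Prime] : (sigma p - 1) ^ p = 0 := by
  have := charP_of_injective_algebraMap' (ZMod p) (A := Sp p) p
  rw [sub_pow_char, sigma_pow_self, one_pow, sub_self]

theorem smulMap_pow (p : ℕ) (M : Type*) [AddCommGroup M] [Module (Sp p) M] [Module (ZMod p) M]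
    [IsScalarTower (ZMod p) (Sp p) M] (s : Sp p) (k : ℕ) :
    smulMap p M (s ^ k) = smulMap p M s ^ k := by
  induction k with
  | zero => ext m; exact one_smul _ m
  | succ k ih => ext m; rw [pow_succ, pow_succ, Module.End.mul_apply, ← ih]; exact mul_smul _ _ m

theorem stmt14_general (p : ℕ) [Fact p.Prime]
    (M A : Type*) [AddCommGroup M] [Module (Sp p) M]
    [Module (ZMod p) M] [IsScalarTower (ZMod p) (Sp p) M]
    [AddCommGroup A] [Module (ZMod p) A]
    (c : M →ₗ[ZMod p] A) (r : A →ₗ[ZMod p] M)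
    (hrc : ∀ m : M, r (c m) = (sigma p - 1) ^ (p - 1) • m)
    (hker : LinearMap.ker c = LinearMap.range (smulMap p M (sigma p - 1)))
    (hfix : Submodule.map c (LinearMap.ker (smulMap p M (sigma p - 1))) = LinearMap.ker r) :
    LinearMap.ker (smulMap p M (sigma p - 1)) ⊓
        LinearMap.range (smulMap p M (sigma p - 1)) =
      LinearMap.range (smulMap p M ((sigma p - 1) ^ (p - 1))) := by
  have hp : 1 ≤ p - 1 := Nat.le_sub_one_of_lt (Fact.out : p.Prime).one_lt
  have hrc' : r ∘ₗ c = smulMap p M (sigma p - 1) ^ (p - 1) := by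
    ext m; rw [comp_apply, hrc, ← smulMap_pow]; rfl
  have hnil : smulMap p M (sigma p - 1) ^ (p - 1 + 1) = 0 := by
    ext m
    rw [← smulMap_pow, Nat.sub_add_cancel (Fact.out : p.Prime).one_le, sigma_sub_one_pow_self]
    exact zero_smul _ m
  rw [smulMap_pow]
  exact le_antisymm (ker_inf_range_le_range_pow hrc' hker hfix.ge hp)
    (range_pow_le_ker_inf_range hnil hp)

/-- Abstract version of Lemma 3: under the hypotheses on `c = cor` and `r = res`,
the fixed points meet the image of `σ-1` exactly in the image of `(σ-1)^(p-1)`: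
`M^H ∩ (σ-1)M = (σ-1)^(p-1)M`. -/
theorem stmt14 (p : ℕ) [Fact p.Prime]
    (M A : Type*) [AddCommGroup M] [Module (Sp p) M]
    [Module (ZMod p) M] [IsScalarTower (ZMod p) (Sp p) M]
    [AddCommGroup A] [Module (ZMod p) A]
    (c : M →ₗ[ZMod p] A) (r : A →ₗ[ZMod p] M)
    (hrc : ∀ m : M, r (c m) = (sigma p - 1) ^ (p - 1) • m)
    (hsurj : Function.Surjective c)
    (hker : LinearMap.ker c = LinearMap.range (smulMap p M (sigma p - 1)))
    (hcomm : ∀ m : M, c (sigma p • m) = c m)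
    (hfix : Submodule.map c (LinearMap.ker (smulMap p M (sigma p - 1))) = LinearMap.ker r)
    (hX : ∃ X : Submodule (ZMod p) M, (∀ x ∈ X, sigma p • x = x) ∧
      Set.BijOn c X (LinearMap.ker r)) :
    LinearMap.ker (smulMap p M (sigma p - 1)) ⊓
        LinearMap.range (smulMap p M (sigma p - 1)) =
      LinearMap.range (smulMap p M ((sigma p - 1) ^ (p - 1))) :=
  stmt14_general p M A c r hrc hker hfix
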